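/- Let (X_τ)_{τ∈ℤ} be a two-sided stationary Markov chain on {1,…,d} with transition matrix P₀ and marginal law π₀, assumed in the form: for all σ ∈ ℤ, n ≥ 0 and functions f,g : {1,…,d} → ℝ, E[f(X_σ) g(X_{σ+n})] = Σ_x π₀(x) f(x) (P₀ⁿ g)(x). Let ℰ be a d×d real matrix, ε_k(x) = ℰ(x,k), and let m ≥ 1 be an integer. Suppose the autocorrelation of the input process has the form R_ζ(n) = Σ_{j=1}^{n_G} A_j ρ_jⁿ for n ≥ 0, where A_j ∈ ℂ and ρ_j ∈ ℂ with |ρ_j| < 1. Then for every θ ∈ ℝ and all k, l, the two-sided series Σ_{τ∈ℤ} E[ε_k(X_0) ε_l(X_τ)] R_ζ(m|τ|) e^{−iτθ} converges absolutely and equals Σ_{j=1}^{n_G} A_j ( ⟨ε_k, U_{ϱ_j} ε_l⟩ + ⟨ε_l, U_{ϱ_j'} ε_k⟩ − ⟨ε_k, ε_l⟩ ), where ϱ_j = ρ_jᵐ e^{−iθ} and ϱ_j' = ρ_jᵐ e^{iθ}. -/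

import Mathlib

/-! Expanding `R(m|τ|) = Σ_j A_j (ρ_jᵐ)^|τ|` splits the series into `n_G` two-sided series
`Σ_τ E[f(X_0) g(X_τ)] z^|τ| e^{-iτθ}` with `|z| < 1`. The correlations are bounded, since the
integrand is and `μ` is a probability measure, so each of these converges absolutely. Split at
`τ = 0` (counted in both halves, whence the `- ⟨f, g⟩`); by stationarity
`E[f(X_0) g(X_n)] = ⟨f, P₀ⁿ g⟩` and `E[f(X_0) g(X_{-n})] = ⟨g, P₀ⁿ f⟩`, so the halves are the
resolvent series `Σ_n ϱⁿ ⟨f, P₀ⁿ g⟩ = ⟨f, U_ϱ g⟩`, which converge because `P₀ⁿ` is stochastic. -/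

open MeasureTheory Matrix

/-- The bilinear pairing `⟨f,g⟩ = Σ_x π₀(x) f(x) g(x)`, extended bilinearly (without
conjugation) to complex-valued functions. -/
noncomputable def pairing (d : ℕ) (π₀ : Fin d → ℝ) (f g : Fin d → ℂ) : ℂ :=
  ∑ x, (π₀ x : ℂ) * f x * g x

/-- The resolvent `U_ϱ = Σ_{n=0}^∞ ϱⁿ P₀ⁿ` applied to a function `g`. -/
noncomputable def resolventApply (d : ℕ) (P₀ : Matrix (Fin d) (Fin d) ℝ) (ϱ : ℂ)
    (g : Fin d → ℂ) : Fin d → ℂ :=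
  fun x => ∑' n : ℕ, ϱ ^ n * ∑ y, ((P₀ ^ n) x y : ℂ) * g y

open Complex

section GeometricSeries

variable {𝕜 : Type*} [NormedDivisionRing 𝕜] {z : 𝕜} {C : ℝ}

lemma summable_norm_pow_mul_of_norm_le (hz : ‖z‖ < 1) {c : ℕ → 𝕜} (hc : ∀ n, ‖c n‖ ≤ C) :
    Summable fun n => ‖z ^ n * c n‖ :=
  ((summable_geometric_of_lt_one (norm_nonneg z) hz).mul_right C).of_nonneg_of_le
    (fun _ => norm_nonneg _) fun n => by rw [norm_mul, norm_pow]; gcongr; exact hc n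

lemma summable_norm_pow_natAbs_mul_of_norm_le (hz : ‖z‖ < 1) {E : ℤ → 𝕜}
    (hE : ∀ τ, ‖E τ‖ ≤ C) : Summable fun τ : ℤ => ‖z ^ τ.natAbs * E τ‖ :=
  .of_nat_of_neg (by simpa using summable_norm_pow_mul_of_norm_le hz fun n => hE n)
    (by simpa using summable_norm_pow_mul_of_norm_le hz fun n => hE (-n))

end GeometricSeries

section TwoSidedSeries

variable {E : ℤ → ℂ} {C : ℝ} {z : ℂ}

lemma summable_norm_mul_pow_natAbs_mul_exp (hE : ∀ τ, ‖E τ‖ ≤ C) (hz : ‖z‖ < 1) (θ : ℝ) :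
    Summable fun τ : ℤ => ‖E τ * z ^ τ.natAbs * exp (-(τ : ℂ) * θ * I)‖ := by
  refine (summable_norm_pow_natAbs_mul_of_norm_le hz hE).congr fun τ => ?_
  have hexp : ‖exp (-(τ : ℂ) * θ * I)‖ = 1 := by
    simpa using norm_exp_ofReal_mul_I (-τ * θ)
  rw [norm_mul, norm_mul, norm_mul, hexp, mul_one, mul_comm]

lemma hasSum_mul_pow_natAbs_mul_exp (hE : ∀ τ, ‖E τ‖ ≤ C) (hz : ‖z‖ < 1) (θ : ℝ) :
    HasSum (fun τ : ℤ => E τ * z ^ τ.natAbs * exp (-(τ : ℂ) * θ * I))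
      (∑' n : ℕ, (z * exp (-θ * I)) ^ n * E n + ∑' n : ℕ, (z * exp (θ * I)) ^ n * E (-n)
        - E 0) := by
  set F : ℤ → ℂ := fun τ => E τ * z ^ τ.natAbs * exp (-(τ : ℂ) * θ * I)
  have hzw (w : ℝ) : ‖z * exp (w * I)‖ < 1 := by
    rwa [norm_mul, norm_exp_ofReal_mul_I, mul_one]
  have hpos : HasSum (fun n : ℕ => F n) (∑' n : ℕ, (z * exp (-θ * I)) ^ n * E n) := by
    refine (summable_norm_pow_mul_of_norm_le (by exact_mod_cast hzw (-θ))
      fun n => hE n).of_norm.hasSum.congr_fun fun n => ?_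
    simp only [F, Int.natAbs_natCast, mul_pow, ← exp_nat_mul, Int.cast_natCast]
    ring_nf
  have hneg : HasSum (fun n : ℕ => F (-n)) (∑' n : ℕ, (z * exp (θ * I)) ^ n * E (-n)) := by
    refine (summable_norm_pow_mul_of_norm_le (hzw θ)
      fun n => hE (-n)).of_norm.hasSum.congr_fun fun n => ?_
    simp only [F, Int.natAbs_neg, Int.natAbs_natCast, mul_pow, ← exp_nat_mul, Int.cast_neg,
      Int.cast_natCast]
    ring_nf
  simpa [F] using hpos.of_nat_of_neg hneg

end TwoSidedSeries

section StochasticMatrix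

variable {d : ℕ} {P : Matrix (Fin d) (Fin d) ℝ}

lemma norm_sum_mul_le_of_mem_rowStochastic (hP : P ∈ rowStochastic ℝ (Fin d))
    (g : Fin d → ℂ) (x : Fin d) : ‖∑ y, (P x y : ℂ) * g y‖ ≤ ∑ y, ‖g y‖ :=
  (norm_sum_le _ _).trans <| Finset.sum_le_sum fun y _ => by
    rw [norm_mul, norm_real, Real.norm_of_nonneg (nonneg_of_mem_rowStochastic hP)]
    exact mul_le_of_le_one_left (norm_nonneg _) (le_one_of_mem_rowStochastic hP)

lemma hasSum_pairing_resolventApply (hP : P ∈ rowStochastic ℝ (Fin d)) (π : Fin d → ℝ)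
    (f g : Fin d → ℂ) {ϱ : ℂ} (hϱ : ‖ϱ‖ < 1) :
    HasSum (fun n => ϱ ^ n * pairing d π f (fun x => ∑ y, ((P ^ n) x y : ℂ) * g y))
      (pairing d π f (resolventApply d P ϱ g)) := by
  have hres (x : Fin d) : HasSum (fun n => ϱ ^ n * ∑ y, ((P ^ n) x y : ℂ) * g y)
      (resolventApply d P ϱ g x) :=
    (summable_norm_pow_mul_of_norm_le hϱ fun n =>
      norm_sum_mul_le_of_mem_rowStochastic (pow_mem hP n) g x).of_norm.hasSum
  refine (hasSum_sum fun x _ => (hres x).mul_left ((π x : ℂ) * f x)).congr_fun fun n => ?_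
  rw [pairing, Finset.mul_sum]
  exact Finset.sum_congr rfl fun x _ => by ring

lemma ofReal_sum_mul_mulVec (π f g : Fin d → ℝ) (M : Matrix (Fin d) (Fin d) ℝ) :
    ((∑ x, π x * f x * (M *ᵥ g) x : ℝ) : ℂ) =
      pairing d π (fun x => f x) (fun x => ∑ y, (M x y : ℂ) * g y) := by
  simp [pairing, mulVec, dotProduct]

end StochasticMatrix

section CrossCorrelation

variable {Ω S : Type*} {mΩ : MeasurableSpace Ω} (μ : Measure Ω) (X : ℤ → Ω → S)

noncomputable def crossCorrelation (f g : S → ℝ) (τ : ℤ) : ℂ :=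
  ((∫ ω, f (X 0 ω) * g (X τ ω) ∂μ : ℝ) : ℂ)

lemma norm_crossCorrelation_le [IsProbabilityMeasure μ] [Fintype S] (f g : S → ℝ) (τ : ℤ) :
    ‖crossCorrelation μ X f g τ‖ ≤ ‖f‖ * ‖g‖ := by
  rw [crossCorrelation, norm_real]
  simpa using norm_integral_le_of_norm_le_const (μ := μ) <| ae_of_all _ fun ω =>
    (norm_mul_le _ _).trans <| mul_le_mul (norm_le_pi_norm f _) (norm_le_pi_norm g _)
      (norm_nonneg _) (norm_nonneg _)

end CrossCorrelation

section StationaryMarkovChain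

variable {Ω : Type*} {mΩ : MeasurableSpace Ω} {d : ℕ}

/-- The chain is specified only through its two-time correlations. -/
def IsStationaryMarkovChain (μ : Measure Ω) (P : Matrix (Fin d) (Fin d) ℝ) (π : Fin d → ℝ)
    (X : ℤ → Ω → Fin d) : Prop :=
  ∀ (σ : ℤ) (n : ℕ) (f g : Fin d → ℝ),
    ∫ ω, f (X σ ω) * g (X (σ + n) ω) ∂μ = ∑ x, π x * f x * (P ^ n *ᵥ g) x

variable {μ : Measure Ω} {P : Matrix (Fin d) (Fin d) ℝ} {π : Fin d → ℝ} {X : ℤ → Ω → Fin d}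

lemma crossCorrelation_natCast (hX : IsStationaryMarkovChain μ P π X) (f g : Fin d → ℝ)
    (n : ℕ) :
    crossCorrelation μ X f g n =
      pairing d π (fun x => f x) (fun x => ∑ y, ((P ^ n) x y : ℂ) * g y) := by
  have h := hX 0 n f g
  rw [zero_add] at h
  rw [crossCorrelation, h, ofReal_sum_mul_mulVec]

lemma crossCorrelation_neg_natCast (hX : IsStationaryMarkovChain μ P π X) (f g : Fin d → ℝ)
    (n : ℕ) :
    crossCorrelation μ X f g (-n) =
      pairing d π (fun x => g x) (fun x => ∑ y, ((P ^ n) x y : ℂ) * f y) := by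
  have h := hX (-n) n g f
  rw [neg_add_cancel] at h
  rw [crossCorrelation, ← ofReal_sum_mul_mulVec, ← h]
  simp_rw [mul_comm (f _)]

lemma crossCorrelation_zero (hX : IsStationaryMarkovChain μ P π X) (f g : Fin d → ℝ) :
    crossCorrelation μ X f g 0 = pairing d π (fun x => f x) (fun x => g x) := by
  simpa [Matrix.one_apply, apply_ite] using crossCorrelation_natCast hX f g 0

lemma hasSum_crossCorrelation_mul_pow_natAbs_mul_exp [IsProbabilityMeasure μ]
    (hX : IsStationaryMarkovChain μ P π X) (hP : P ∈ rowStochastic ℝ (Fin d))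
    (f g : Fin d → ℝ) {z : ℂ} (hz : ‖z‖ < 1) (θ : ℝ) :
    HasSum (fun τ : ℤ => crossCorrelation μ X f g τ * z ^ τ.natAbs * exp (-(τ : ℂ) * θ * I))
      (pairing d π (fun x => f x) (resolventApply d P (z * exp (-θ * I)) (fun x => g x)) +
        pairing d π (fun x => g x) (resolventApply d P (z * exp (θ * I)) (fun x => f x)) -
        pairing d π (fun x => f x) (fun x => g x)) := by
  have hzw (w : ℝ) : ‖z * exp (w * I)‖ < 1 := by
    rwa [norm_mul, norm_exp_ofReal_mul_I, mul_one]
  have h := hasSum_mul_pow_natAbs_mul_exp (norm_crossCorrelation_le μ X f g) hz θ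
  simp_rw [crossCorrelation_natCast hX, crossCorrelation_neg_natCast hX] at h
  rwa [(hasSum_pairing_resolventApply hP π _ _ (by exact_mod_cast hzw (-θ))).tsum_eq,
    (hasSum_pairing_resolventApply hP π _ _ (hzw θ)).tsum_eq, crossCorrelation_zero hX] at h

end StationaryMarkovChain

theorem stmt8_general {Ω : Type*} {mΩ : MeasurableSpace Ω} (μ : Measure Ω) [IsProbabilityMeasure μ]
    (d : ℕ) (P₀ : Matrix (Fin d) (Fin d) ℝ) (π₀ : Fin d → ℝ)
    (hPnonneg : ∀ x x', 0 ≤ P₀ x x') (hProw : ∀ x, ∑ x', P₀ x x' = 1)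
    (X : ℤ → Ω → Fin d)
    (hstat : ∀ (σ : ℤ) (n : ℕ) (f g : Fin d → ℝ),
      ∫ ω, f (X σ ω) * g (X (σ + n) ω) ∂μ = ∑ x, π₀ x * f x * (P₀ ^ n).mulVec g x)
    (ℰ : Matrix (Fin d) (Fin d) ℝ)
    (m : ℕ) (hm : 1 ≤ m)
    (nG : ℕ) (A : Fin nG → ℂ) (ρ : Fin nG → ℂ) (hρ : ∀ j, ‖ρ j‖ < 1)
    (R : ℕ → ℂ) (hR : ∀ n, R n = ∑ j, A j * ρ j ^ n) :
    ∀ (θ : ℝ) (k l : Fin d),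
      Summable (fun τ : ℤ =>
        ‖((∫ ω, ℰ (X 0 ω) k * ℰ (X τ ω) l ∂μ : ℝ) : ℂ) * R (m * τ.natAbs) *
          Complex.exp (-(τ : ℂ) * (θ : ℂ) * Complex.I)‖) ∧
      ∑' τ : ℤ, ((∫ ω, ℰ (X 0 ω) k * ℰ (X τ ω) l ∂μ : ℝ) : ℂ) * R (m * τ.natAbs) *
          Complex.exp (-(τ : ℂ) * (θ : ℂ) * Complex.I) =
        ∑ j, A j *
          (pairing d π₀ (fun x => (ℰ x k : ℂ))
              (resolventApply d P₀ (ρ j ^ m * Complex.exp (-(θ : ℂ) * Complex.I))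
                (fun x => (ℰ x l : ℂ))) +
            pairing d π₀ (fun x => (ℰ x l : ℂ))
              (resolventApply d P₀ (ρ j ^ m * Complex.exp ((θ : ℂ) * Complex.I))
                (fun x => (ℰ x k : ℂ))) -
            pairing d π₀ (fun x => (ℰ x k : ℂ)) (fun x => (ℰ x l : ℂ))) := by
  intro θ k l
  have hP : P₀ ∈ rowStochastic ℝ (Fin d) := mem_rowStochastic_iff_sum.2 ⟨hPnonneg, hProw⟩
  have hz (j : Fin nG) : ‖ρ j ^ m‖ < 1 := by
    rw [norm_pow]
    exact pow_lt_one₀ (norm_nonneg _) (hρ j) (by omega)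
  set c := crossCorrelation μ X (fun x => ℰ x k) (fun x => ℰ x l)
  set F : Fin nG → ℤ → ℂ := fun j τ => c τ * (ρ j ^ m) ^ τ.natAbs * exp (-(τ : ℂ) * θ * I)
  have hsummand (τ : ℤ) :
      c τ * R (m * τ.natAbs) * exp (-(τ : ℂ) * θ * I) = ∑ j, A j * F j τ := by
    simp only [F, hR, pow_mul, Finset.mul_sum, Finset.sum_mul]
    exact Finset.sum_congr rfl fun j _ => by ring
  have hF_norm (j : Fin nG) : Summable fun τ => ‖F j τ‖ :=
    summable_norm_mul_pow_natAbs_mul_exp (norm_crossCorrelation_le μ X _ _) (hz j) θ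
  have hF_sum (j : Fin nG) := hasSum_crossCorrelation_mul_pow_natAbs_mul_exp
    hstat hP (fun x => ℰ x k) (fun x => ℰ x l) (hz j) θ
  refine ⟨?_, ?_⟩
  · exact (summable_sum (s := Finset.univ) fun j _ => (hF_norm j).mul_left ‖A j‖).of_nonneg_of_le
      (fun _ => norm_nonneg _) fun τ => (congrArg norm (hsummand τ)).trans_le <|
        (norm_sum_le _ _).trans_eq (Finset.sum_congr rfl fun j _ => norm_mul _ _)
  · exact ((hasSum_sum fun j _ => (hF_sum j).mul_left (A j)).congr_fun hsummand).tsum_eq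

/-- **Extension of Proposition 2.**  When the input autocorrelation is a finite sum of
geometric terms `R_ζ(n) = Σ_j A_j ρ_jⁿ` with `|ρ_j| < 1`, the two-sided series
`Σ_τ E[ε_k(X_0) ε_l(X_τ)] R_ζ(m|τ|) e^{−iτθ}` converges absolutely and equals
`Σ_j A_j (⟨ε_k, U_{ϱ_j} ε_l⟩ + ⟨ε_l, U_{ϱ_j'} ε_k⟩ − ⟨ε_k, ε_l⟩)`, where
`ϱ_j = ρ_jᵐ e^{−iθ}` and `ϱ_j' = ρ_jᵐ e^{iθ}`. -/
theorem stmt8 {Ω : Type*} {mΩ : MeasurableSpace Ω} (μ : Measure Ω) [IsProbabilityMeasure μ]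
    (d : ℕ) (P₀ : Matrix (Fin d) (Fin d) ℝ) (π₀ : Fin d → ℝ)
    (hPnonneg : ∀ x x', 0 ≤ P₀ x x') (hProw : ∀ x, ∑ x', P₀ x x' = 1)
    (hπnonneg : ∀ x, 0 ≤ π₀ x) (hπsum : ∑ x, π₀ x = 1)
    (hπinv : ∀ x', ∑ x, π₀ x * P₀ x x' = π₀ x')
    (X : ℤ → Ω → Fin d) (hXmeas : ∀ τ, Measurable (X τ))
    (hstat : ∀ (σ : ℤ) (n : ℕ) (f g : Fin d → ℝ),
      ∫ ω, f (X σ ω) * g (X (σ + n) ω) ∂μ = ∑ x, π₀ x * f x * (P₀ ^ n).mulVec g x)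
    (ℰ : Matrix (Fin d) (Fin d) ℝ)
    (m : ℕ) (hm : 1 ≤ m)
    (nG : ℕ) (A : Fin nG → ℂ) (ρ : Fin nG → ℂ) (hρ : ∀ j, ‖ρ j‖ < 1)
    (R : ℕ → ℂ) (hR : ∀ n, R n = ∑ j, A j * ρ j ^ n) :
    ∀ (θ : ℝ) (k l : Fin d),
      Summable (fun τ : ℤ =>
        ‖((∫ ω, ℰ (X 0 ω) k * ℰ (X τ ω) l ∂μ : ℝ) : ℂ) * R (m * τ.natAbs) *
          Complex.exp (-(τ : ℂ) * (θ : ℂ) * Complex.I)‖) ∧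
      ∑' τ : ℤ, ((∫ ω, ℰ (X 0 ω) k * ℰ (X τ ω) l ∂μ : ℝ) : ℂ) * R (m * τ.natAbs) *
          Complex.exp (-(τ : ℂ) * (θ : ℂ) * Complex.I) =
        ∑ j, A j *
          (pairing d π₀ (fun x => (ℰ x k : ℂ))
              (resolventApply d P₀ (ρ j ^ m * Complex.exp (-(θ : ℂ) * Complex.I))
                (fun x => (ℰ x l : ℂ))) +
            pairing d π₀ (fun x => (ℰ x l : ℂ))
              (resolventApply d P₀ (ρ j ^ m * Complex.exp ((θ : ℂ) * Complex.I))
                (fun x => (ℰ x k : ℂ))) -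
            pairing d π₀ (fun x => (ℰ x k : ℂ)) (fun x => (ℰ x l : ℂ))) :=
  stmt8_general (mΩ := mΩ) μ d P₀ π₀ hPnonneg hProw X hstat ℰ m hm nG A ρ hρ R hR
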